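/- arXiv:1904.04727 — 7 statements merged into one kernel-verified Lean document; each statement's English description precedes it below -/
import Mathlib

section
/- If x̲ ≤ x ≤ x̄ in ℝⁿ and A̲ ≤ A ≤ Ā elementwise for matrices A, A̲, Ā ∈ ℝ^{m×n}, then A̲⁺x̲⁺ − Ā⁺x̲⁻ − A̲⁻x̄⁺ + Ā⁻x̄⁻ ≤ Ax ≤ Ā⁺x̄⁺ − A̲⁺x̄⁻ − Ā⁻x̲⁺ + A̲⁻x̲⁻. -/
open Matrix

noncomputable def matPos {m n : ℕ} (A : Matrix (Fin m) (Fin n) ℝ) : Matrix (Fin m) (Fin n) ℝ :=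
  fun i j => max (A i j) 0

noncomputable def matNeg {m n : ℕ} (A : Matrix (Fin m) (Fin n) ℝ) : Matrix (Fin m) (Fin n) ℝ :=
  matPos A - A

noncomputable def vecPos {n : ℕ} (x : Fin n → ℝ) : Fin n → ℝ := fun i => max (x i) 0

noncomputable def vecNeg {n : ℕ} (x : Fin n → ℝ) : Fin n → ℝ := vecPos x - x

lemma pos_mono' {a b : ℝ} (h : a ≤ b) : max a 0 ≤ max b 0 := max_le_max h le_rfl

lemma neg_anti' {a b : ℝ} (h : a ≤ b) : max b 0 - b ≤ max a 0 - a := by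
  rcases le_total a 0 with h1|h1 <;> rcases le_total b 0 with h2|h2 <;>
    simp [max_eq_left, max_eq_right, *] <;> linarith

lemma scal_ub (a al au x xl xu : ℝ) (h1 : al ≤ a) (h2 : a ≤ au) (h3 : xl ≤ x) (h4 : x ≤ xu) :
    a * x ≤ max au 0 * max xu 0 - max al 0 * (max xu 0 - xu)
      - (max au 0 - au) * max xl 0 + (max al 0 - al) * (max xl 0 - xl) := by
  nlinarith [mul_le_mul (pos_mono' h2) (pos_mono' h4) (le_max_right x 0) (le_max_right au 0),
    mul_le_mul (pos_mono' h1) (neg_anti' h4) (by linarith [neg_anti' h4, le_max_left xu 0] : (0:ℝ) ≤ max xu 0 - xu) (le_max_right a 0),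
    mul_le_mul (neg_anti' h2) (pos_mono' h3) (le_max_right xl 0) (by linarith [le_max_left a 0] : (0:ℝ) ≤ max a 0 - a),
    mul_le_mul (neg_anti' h1) (neg_anti' h3) (by linarith [le_max_left x 0] : (0:ℝ) ≤ max x 0 - x) (by linarith [le_max_left al 0] : (0:ℝ) ≤ max al 0 - al)]

lemma scal_lb (a al au x xl xu : ℝ) (h1 : al ≤ a) (h2 : a ≤ au) (h3 : xl ≤ x) (h4 : x ≤ xu) :
    max al 0 * max xl 0 - max au 0 * (max xl 0 - xl)
      - (max al 0 - al) * max xu 0 + (max au 0 - au) * (max xu 0 - xu) ≤ a * x := by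
  nlinarith [mul_le_mul (pos_mono' h1) (pos_mono' h3) (le_max_right xl 0) (le_max_right a 0),
    mul_le_mul (pos_mono' h2) (neg_anti' h3) (by linarith [le_max_left x 0] : (0:ℝ) ≤ max x 0 - x) (le_max_right au 0),
    mul_le_mul (neg_anti' h1) (pos_mono' h4) (le_max_right x 0) (by linarith [le_max_left al 0] : (0:ℝ) ≤ max al 0 - al),
    mul_le_mul (neg_anti' h2) (neg_anti' h4) (by linarith [le_max_left xu 0] : (0:ℝ) ≤ max xu 0 - xu) (by linarith [le_max_left a 0] : (0:ℝ) ≤ max a 0 - a)]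

theorem stmt1 {m n : ℕ} (A Al Au : Matrix (Fin m) (Fin n) ℝ) (x xl xu : Fin n → ℝ)
    (hxl : xl ≤ x) (hxu : x ≤ xu)
    (hAl : ∀ i j, Al i j ≤ A i j) (hAu : ∀ i j, A i j ≤ Au i j) :
    (matPos Al).mulVec (vecPos xl) - (matPos Au).mulVec (vecNeg xl)
        - (matNeg Al).mulVec (vecPos xu) + (matNeg Au).mulVec (vecNeg xu) ≤ A.mulVec x ∧
      A.mulVec x ≤ (matPos Au).mulVec (vecPos xu) - (matPos Al).mulVec (vecNeg xu)
        - (matNeg Au).mulVec (vecPos xl) + (matNeg Al).mulVec (vecNeg xl) := by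
  constructor <;> intro i <;>
    simp only [Pi.add_apply, Pi.sub_apply, mulVec, dotProduct, matPos, matNeg, vecPos, vecNeg,
      Matrix.sub_apply, ← Finset.sum_sub_distrib, ← Finset.sum_add_distrib]
  · exact Finset.sum_le_sum fun j _ =>
      scal_lb (A i j) (Al i j) (Au i j) (x j) (xl j) (xu j)
        (hAl i j) (hAu i j) (hxl j) (hxu j)
  · exact Finset.sum_le_sum fun j _ =>
      scal_ub (A i j) (Al i j) (Au i j) (x j) (xl j) (xu j)
        (hAl i j) (hAu i j) (hxl j) (hxu j)
end

section
/- Given A ∈ ℝ^{n×n}, Y ∈ ℝ^{n×n}, C ∈ ℝ^{p×n} and L ∈ ℝ^{n×p} such that A − LC and Y have the same characteristic polynomial, if the pairs (A − LC, χ₁) and (Y, χ₂) are observable for some row vectors χ₁, χ₂ ∈ ℝ^{1×n}, then there exists an invertible matrix S ∈ ℝ^{n×n} with Y = S(A − LC)S⁻¹. -/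
open Matrix

/-- The pair `(M, χ)` is observable if the observability matrix with rows
`χ, χM, …, χM^(n-1)` has full rank `n`. -/
def Observable {n : ℕ} (M : Matrix (Fin n) (Fin n) ℝ) (χ : Matrix (Fin 1) (Fin n) ℝ) : Prop :=
  (Matrix.of (fun (i : Fin n) (j : Fin n) => (χ * M ^ (i : ℕ)) 0 j)).rank = n

/-!
Both pairs are brought to the observable canonical form: if `O` is the observability matrix of
`(M, χ)`, then `O * M = K * O` where `K` is the companion matrix of the characteristic polynomial
of `M` (the last row of this identity is the Cayley–Hamilton theorem). Observability makes `O`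
invertible, so `A - L * C` and `Y`, having the same characteristic polynomial, are both similar
to the same companion matrix, hence to each other.
-/

open Polynomial

section CommRing

variable {R : Type*} [CommRing R]

theorem Matrix.pow_card_add_sum_coeff_charpoly_smul_pow [Nontrivial R] {m : Type*} [Fintype m]
    [DecidableEq m] (M : Matrix m m R) :
    M ^ Fintype.card m + ∑ i ∈ Finset.range (Fintype.card m), M.charpoly.coeff i • M ^ i = 0 := by
  have hCH := M.aeval_self_charpoly
  rw [M.charpoly_monic.as_sum, M.charpoly_natDegree_eq_dim] at hCH
  simpa [Algebra.smul_def] using hCH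

noncomputable def observabilityMatrix {n : ℕ} (M : Matrix (Fin n) (Fin n) R)
    (χ : Matrix (Fin 1) (Fin n) R) : Matrix (Fin n) (Fin n) R :=
  Matrix.of fun i j => (χ * M ^ (i : ℕ)) 0 j

/-- The companion matrix of `p` in the form whose last row is `-(p₀, …, p_{n-1})`. -/
def companion (n : ℕ) (p : R[X]) : Matrix (Fin n) (Fin n) R :=
  Matrix.of fun i j =>
    if h : (i : ℕ) + 1 < n then (if j = ⟨(i : ℕ) + 1, h⟩ then 1 else 0) else -p.coeff j

theorem observabilityMatrix_mul_eq_companion_mul [Nontrivial R] {n : ℕ}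
    (M : Matrix (Fin n) (Fin n) R) (χ : Matrix (Fin 1) (Fin n) R) :
    observabilityMatrix M χ * M = companion n M.charpoly * observabilityMatrix M χ := by
  ext i j
  have hrow : (observabilityMatrix M χ * M) i j = (χ * M ^ ((i : ℕ) + 1)) 0 j := by
    simp only [pow_succ, ← Matrix.mul_assoc]
    simp [observabilityMatrix, Matrix.mul_apply]
  rw [hrow]
  by_cases h : (i : ℕ) + 1 < n
  · simp [Matrix.mul_apply, companion, observabilityMatrix, h]
  · have hi : (i : ℕ) + 1 = n := by omega
    have hCH := M.pow_card_add_sum_coeff_charpoly_smul_pow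
    rw [Fintype.card_fin, add_eq_zero_iff_eq_neg] at hCH
    rw [hi, hCH, Matrix.mul_neg, Matrix.mul_sum, ← Fin.sum_univ_eq_sum_range, Matrix.mul_apply]
    simp [companion, observabilityMatrix, h, Matrix.sum_apply]

end CommRing

section Field

variable {K : Type*} [Field K]

theorem Matrix.isUnit_det_of_rank_eq_card {m : Type*} [Fintype m] [DecidableEq m]
    {A : Matrix m m K} (h : A.rank = Fintype.card m) : IsUnit A.det := by
  rw [← isUnit_iff_isUnit_det, ← linearIndependent_rows_iff_isUnit,
    linearIndependent_iff_card_eq_finrank_span, Set.finrank, ← rank_eq_finrank_span_row, h]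

theorem eq_conj_of_mul_eq_mul_of_isUnit_det {m : Type*} [Fintype m] [DecidableEq m]
    {M Y B O₁ O₂ : Matrix m m K} (hO₁ : IsUnit O₁.det) (hO₂ : IsUnit O₂.det)
    (h₁ : O₁ * M = B * O₁) (h₂ : O₂ * Y = B * O₂) :
    Y = (O₂⁻¹ * O₁) * M * (O₂⁻¹ * O₁)⁻¹ := by
  rw [Matrix.mul_inv_rev, Matrix.nonsing_inv_nonsing_inv O₂ hO₂]
  calc Y = O₂⁻¹ * (O₂ * Y) := by rw [← Matrix.mul_assoc, O₂.nonsing_inv_mul hO₂, Matrix.one_mul]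
    _ = O₂⁻¹ * (O₁ * M * O₁⁻¹) * O₂ := by
        rw [h₂, h₁, Matrix.mul_assoc B, O₁.mul_nonsing_inv hO₁, Matrix.mul_one, Matrix.mul_assoc]
    _ = O₂⁻¹ * O₁ * M * (O₁⁻¹ * O₂) := by simp only [Matrix.mul_assoc]

end Field

theorem stmt6 {n p : ℕ} (A Y : Matrix (Fin n) (Fin n) ℝ) (C : Matrix (Fin p) (Fin n) ℝ)
    (L : Matrix (Fin n) (Fin p) ℝ) (χ₁ χ₂ : Matrix (Fin 1) (Fin n) ℝ)
    (hchar : (A - L * C).charpoly = Y.charpoly)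
    (hobs1 : Observable (A - L * C) χ₁) (hobs2 : Observable Y χ₂) :
    ∃ S : Matrix (Fin n) (Fin n) ℝ, IsUnit S.det ∧ Y = S * (A - L * C) * S⁻¹ := by
  have hO₁ : IsUnit (observabilityMatrix (A - L * C) χ₁).det :=
    isUnit_det_of_rank_eq_card (hobs1.trans (Fintype.card_fin n).symm)
  have hO₂ : IsUnit (observabilityMatrix Y χ₂).det :=
    isUnit_det_of_rank_eq_card (hobs2.trans (Fintype.card_fin n).symm)
  refine ⟨_, ?_, eq_conj_of_mul_eq_mul_of_isUnit_det hO₁ hO₂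
    (observabilityMatrix_mul_eq_companion_mul _ χ₁)
    (hchar ▸ observabilityMatrix_mul_eq_companion_mul Y χ₂)⟩
  rw [Matrix.det_mul]
  exact (isUnit_nonsing_inv_det _ hO₂).mul hO₁
end

section
/- Let D_a = D_aᵀ ∈ ℝ^{n×n}, Δ ∈ ℝ₊^{n×n}, and Ξ = {D : D_a − Δ ≤ D ≤ D_a + Δ}. Suppose μ ∈ ℝ₊ and a diagonal matrix Υ are such that the Metzler matrix Y = μE_{n×n} − Υ has the same eigenvalues as D_a, where E_{n×n} is the all-ones matrix. If μ > n‖Δ‖_max, then there exists an orthogonal matrix S ∈ ℝ^{n×n} such that SᵀDS is Metzler for every D ∈ Ξ. -/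
/-!
Since `Da` and `Y = μE - Υ` are both symmetric with the same characteristic polynomial, the spectral
theorem gives an orthogonal `S` with `Sᵀ Da S = Y`, whose off-diagonal entries all equal `μ`. For
`D ∈ Ξ` we have `Sᵀ D S = Y + Sᵀ (D - Da) S`, and since the columns of `S` are unit vectors, each
has `ℓ¹`-norm at most `√n`, so every entry of `Sᵀ (D - Da) S` is bounded by `n ‖Δ‖_max < μ`.
-/

open Matrix

/-- A square matrix is Metzler if all its off-diagonal entries are nonnegative. -/
def Metzler {n : ℕ} (A : Matrix (Fin n) (Fin n) ℝ) : Prop :=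
  ∀ i j, i ≠ j → 0 ≤ A i j

/-- Elementwise maximum norm. -/
noncomputable def maxNorm {n : ℕ} (A : Matrix (Fin n) (Fin n) ℝ) : ℝ :=
  ⨆ i, ⨆ j, |A i j|

theorem Matrix.IsHermitian.exists_unitary_conj_eq_of_charpoly_eq {𝕜 n : Type*} [RCLike 𝕜]
    [Fintype n] [DecidableEq n] {A B : Matrix n n 𝕜} (hA : A.IsHermitian) (hB : B.IsHermitian)
    (h : A.charpoly = B.charpoly) :
    ∃ U : unitaryGroup n 𝕜, star (U : Matrix n n 𝕜) * A * U = B := by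
  have hdiag := hA.conjStarAlgAut_star_eigenvectorUnitary
  rw [(hA.eigenvalues_eq_eigenvalues_iff hB).2 h] at hdiag
  refine ⟨hA.eigenvectorUnitary * star hB.eigenvectorUnitary, ?_⟩
  conv_rhs => rw [hB.spectral_theorem, ← hdiag]
  simp [mul_assoc]

theorem Matrix.IsSymm.exists_orthogonal_conj_eq_of_charpoly_eq {n : Type*} [Fintype n]
    [DecidableEq n] {A B : Matrix n n ℝ} (hA : A.IsSymm) (hB : B.IsSymm)
    (h : A.charpoly = B.charpoly) :
    ∃ S : Matrix n n ℝ, Sᵀ * S = 1 ∧ Sᵀ * A * S = B := by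
  obtain ⟨U, hU⟩ := (isHermitian_iff_isSymm.2 hA).exists_unitary_conj_eq_of_charpoly_eq
    (isHermitian_iff_isSymm.2 hB) h
  refine ⟨U, ?_, ?_⟩
  · simpa [star_eq_conjTranspose] using U.2.1
  · simpa [star_eq_conjTranspose] using hU

section OrthonormalColumns

variable {m n : Type*} [Fintype m] [DecidableEq n]

theorem Matrix.sq_sum_abs_le_card_of_transpose_mul_self_eq_one {S : Matrix m n ℝ}
    (hS : Sᵀ * S = 1) (j : n) : (∑ k, |S k j|) ^ 2 ≤ Fintype.card m := by
  have hcol : ∑ k, S k j ^ 2 = 1 := by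
    simpa [mul_apply, sq] using congrFun (congrFun hS j) j
  simpa [hcol] using sq_sum_le_card_mul_sum_sq (s := Finset.univ) (f := fun k => |S k j|)

theorem Matrix.abs_transpose_mul_mul_apply_le {S : Matrix m n ℝ} (hS : Sᵀ * S = 1)
    {E : Matrix m m ℝ} {c : ℝ} (hc : 0 ≤ c) (hE : ∀ k l, |E k l| ≤ c) (i j : n) :
    |(Sᵀ * E * S) i j| ≤ Fintype.card m * c := by
  have hi := sq_sum_abs_le_card_of_transpose_mul_self_eq_one hS i
  have hj := sq_sum_abs_le_card_of_transpose_mul_self_eq_one hS j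
  have hprod : (∑ k, |S k i|) * (∑ l, |S l j|) ≤ Fintype.card m := by
    nlinarith [sq_nonneg ((∑ k, |S k i|) - ∑ l, |S l j|)]
  calc |(Sᵀ * E * S) i j| = |∑ k, ∑ l, S k i * E k l * S l j| := by
        simp only [mul_apply, transpose_apply, Finset.sum_mul]
        rw [Finset.sum_comm]
    _ ≤ ∑ k, ∑ l, |S k i| * c * |S l j| := by
        refine (Finset.abs_sum_le_sum_abs _ _).trans (Finset.sum_le_sum fun k _ => ?_)
        refine (Finset.abs_sum_le_sum_abs _ _).trans (Finset.sum_le_sum fun l _ => ?_)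
        rw [abs_mul, abs_mul]
        gcongr
        exact hE k l
    _ = c * ((∑ k, |S k i|) * ∑ l, |S l j|) := by
        rw [Finset.sum_mul_sum, Finset.mul_sum]
        refine Finset.sum_congr rfl fun k _ => ?_
        rw [Finset.mul_sum]
        exact Finset.sum_congr rfl fun l _ => by ring
    _ ≤ Fintype.card m * c := by nlinarith

end OrthonormalColumns

theorem maxNorm_nonneg {n : ℕ} (A : Matrix (Fin n) (Fin n) ℝ) : 0 ≤ maxNorm A :=
  Real.iSup_nonneg fun _ => Real.iSup_nonneg fun _ => abs_nonneg _

theorem abs_le_maxNorm {n : ℕ} (A : Matrix (Fin n) (Fin n) ℝ) (i j : Fin n) :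
    |A i j| ≤ maxNorm A :=
  (le_ciSup (Set.finite_range _).bddAbove j).trans
    (le_ciSup (f := fun i => ⨆ j, |A i j|) (Set.finite_range _).bddAbove i)

theorem stmt7_general {n : ℕ} (Da Δ Υ : Matrix (Fin n) (Fin n) ℝ) (μ : ℝ)
    (hDa : Daᵀ = Da)
    (hΥ : ∃ d : Fin n → ℝ, Υ = Matrix.diagonal d)
    (heig : (μ • (Matrix.of fun _ _ => (1 : ℝ)) - Υ).charpoly = Da.charpoly)
    (hμ : μ > n * maxNorm Δ) :
    ∃ S : Matrix (Fin n) (Fin n) ℝ, Sᵀ * S = 1 ∧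
      ∀ D : Matrix (Fin n) (Fin n) ℝ,
        (∀ i j, Da i j - Δ i j ≤ D i j) → (∀ i j, D i j ≤ Da i j + Δ i j) →
        Metzler (Sᵀ * D * S) := by
  obtain ⟨υ, rfl⟩ := hΥ
  have hY : (μ • (of fun _ _ => (1 : ℝ)) - diagonal υ).IsSymm := by
    rw [IsSymm, transpose_sub, transpose_smul, diagonal_transpose]
    rfl
  obtain ⟨S, hS, hSDa⟩ := IsSymm.exists_orthogonal_conj_eq_of_charpoly_eq hDa hY heig.symm
  refine ⟨S, hS, fun D hlo hhi i j hij => ?_⟩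
  have hdev : ∀ k l, |(D - Da) k l| ≤ maxNorm Δ := fun k l => by
    have := (le_abs_self _).trans (abs_le_maxNorm Δ k l)
    rw [Matrix.sub_apply, abs_le]
    constructor <;> linarith [hlo k l, hhi k l]
  have hsplit : (Sᵀ * D * S) i j = μ + (Sᵀ * (D - Da) * S) i j := by
    rw [mul_sub, sub_mul, Matrix.sub_apply, hSDa]
    simp [diagonal_apply_ne _ hij]
  have hbound := abs_le.mp (abs_transpose_mul_mul_apply_le hS (maxNorm_nonneg Δ) hdev i j)
  rw [Fintype.card_fin] at hbound
  rw [hsplit]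
  linarith [hbound.1]

theorem stmt7 {n : ℕ} (Da Δ Υ : Matrix (Fin n) (Fin n) ℝ) (μ : ℝ)
    (hDa : Daᵀ = Da) (hΔ : ∀ i j, 0 ≤ Δ i j) (hμ0 : 0 ≤ μ)
    (hΥ : ∃ d : Fin n → ℝ, Υ = Matrix.diagonal d)
    (hMetz : Metzler (μ • (Matrix.of fun _ _ => (1 : ℝ)) - Υ))
    (heig : (μ • (Matrix.of fun _ _ => (1 : ℝ)) - Υ).charpoly = Da.charpoly)
    (hμ : μ > n * maxNorm Δ) :
    ∃ S : Matrix (Fin n) (Fin n) ℝ, Sᵀ * S = 1 ∧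
      ∀ D : Matrix (Fin n) (Fin n) ℝ,
        (∀ i j, Da i j - Δ i j ≤ D i j) → (∀ i j, D i j ≤ Da i j + Δ i j) →
        Metzler (Sᵀ * D * S) :=
  stmt7_general Da Δ Υ μ hDa hΥ heig hμ
end

section
/- Consider the coupled system ẋ̲ = −θ̄ x̲ − (θ̄ − θ̲)x̲⁻ + d̲, x̄̇ = −θ̄ x̄ + (θ̄ − θ̲)x̄⁺ + d̄, with 0 < θ̲ ≤ θ̄ < 2θ̲ and constants d̲ ≤ d̄. Then for any initial conditions the solutions x̲(t), x̄(t) remain bounded for all t ≥ 0. -/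
/-!
Each equation is a scalar ODE that does not involve the other unknown. Whatever the sign of the
state, its vector field contracts at rate at least `θl`: it is at most `|d| - θl * x` for `x ≥ 0`
and at least `-|d| - θl * x` for `x ≤ 0`. Hence the field points inwards on the boundary of
`[-R, R]` as soon as `R ≥ |d| / θl`, and a comparison argument keeps the solution in such an
interval containing its initial value.
-/

open Set

theorem image_le_of_deriv_nonpos_above {f f' : ℝ → ℝ} {a C : ℝ}
    (hf : ∀ t ∈ Ici a, HasDerivWithinAt f (f' t) (Ici a) t) (ha : f a ≤ C)
    (hC : ∀ t ∈ Ici a, C ≤ f t → f' t ≤ 0) :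
    ∀ t ∈ Ici a, f t ≤ C := by
  intro T hT
  have hcont : ContinuousOn f (Icc a T) := fun t ht =>
    (hf t ht.1).continuousWithinAt.mono fun s hs => hs.1
  have hf' : ∀ t ∈ Ico a T, HasDerivWithinAt f (f' t) (Ici t) t := fun t ht =>
    (hf t ht.1).mono (Ici_subset_Ici.2 ht.1)
  -- Compare with the barriers `C + ε (t - a)`, whose slope beats `f'` wherever `f` touches them.
  have barrier : ∀ ε > (0 : ℝ), f T ≤ C + ε * (T - a) := by
    intro ε hε
    have hB : ∀ t, HasDerivAt (fun t => C + ε * (t - a)) ε t := fun t => by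
      simpa using (((hasDerivAt_id t).sub_const a).const_mul ε).const_add C
    refine image_le_of_deriv_right_lt_deriv_boundary hcont hf' (by simpa using ha) hB
      (fun t ht hft => ?_) (right_mem_Icc.2 hT)
    have : C ≤ f t := by nlinarith [ht.1]
    linarith [hC t ht.1 this]
  refine le_of_forall_pos_le_add fun ε hε => ?_
  have hTa : 0 < T - a + 1 := by linarith [mem_Ici.1 hT]
  calc f T ≤ C + ε / (T - a + 1) * (T - a) := barrier _ (div_pos hε hTa)
    _ ≤ C + ε := by
      rw [div_mul_eq_mul_div, add_le_add_iff_left, div_le_iff₀ hTa]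
      nlinarith

theorem le_max_of_deriv_le_sub_mul {x x' : ℝ → ℝ} {a θ c : ℝ} (hθ : 0 < θ) (hc : 0 ≤ c)
    (hx : ∀ t ∈ Ici a, HasDerivWithinAt x (x' t) (Ici a) t)
    (hpos : ∀ t ∈ Ici a, 0 ≤ x t → x' t ≤ c - θ * x t) :
    ∀ t ∈ Ici a, x t ≤ max (x a) (c / θ) :=
  image_le_of_deriv_nonpos_above hx (le_max_left _ _) fun t ht hxt => by
    have hcx : c ≤ θ * x t := (div_le_iff₀' hθ).1 ((le_max_right _ _).trans hxt)
    have hx0 : 0 ≤ x t := (div_nonneg hc hθ.le).trans ((le_max_right _ _).trans hxt)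
    linarith [hpos t ht hx0]

theorem abs_le_max_of_dissipative {x x' : ℝ → ℝ} {a θ c : ℝ} (hθ : 0 < θ) (hc : 0 ≤ c)
    (hx : ∀ t ∈ Ici a, HasDerivWithinAt x (x' t) (Ici a) t)
    (hpos : ∀ t ∈ Ici a, 0 ≤ x t → x' t ≤ c - θ * x t)
    (hneg : ∀ t ∈ Ici a, x t ≤ 0 → -c - θ * x t ≤ x' t) :
    ∀ t ∈ Ici a, |x t| ≤ max |x a| (c / θ) := by
  intro t ht
  have hupper := le_max_of_deriv_le_sub_mul hθ hc hx hpos t ht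
  have hlower := le_max_of_deriv_le_sub_mul (x := fun t => -x t) hθ hc
    (fun t ht => (hx t ht).neg) (fun t ht h => by linarith [hneg t ht (neg_nonneg.1 h)]) t ht
  exact abs_le.2 ⟨by linarith [max_le_max_right (c / θ) (neg_le_abs (x a))],
    hupper.trans (max_le_max_right _ (le_abs_self _))⟩

section VectorFields

variable {θl θu d x : ℝ}

theorem lowerField_le (hθ : θl ≤ θu) (hx : 0 ≤ x) :
    -θu * x - (θu - θl) * max (-x) 0 + d ≤ |d| - θl * x := by
  rw [max_eq_right (neg_nonpos.2 hx)]
  nlinarith [le_abs_self d]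

theorem le_lowerField (hx : x ≤ 0) :
    -|d| - θl * x ≤ -θu * x - (θu - θl) * max (-x) 0 + d := by
  rw [max_eq_left (neg_nonneg.2 hx)]
  linarith [neg_abs_le d]

theorem upperField_le (hx : 0 ≤ x) :
    -θu * x + (θu - θl) * max x 0 + d ≤ |d| - θl * x := by
  rw [max_eq_left hx]
  linarith [le_abs_self d]

theorem le_upperField (hθ : θl ≤ θu) (hx : x ≤ 0) :
    -|d| - θl * x ≤ -θu * x + (θu - θl) * max x 0 + d := by
  rw [max_eq_right hx]
  nlinarith [neg_abs_le d]

end VectorFields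

theorem stmt12_general (θl θu dl du : ℝ) (hθl : 0 < θl) (hθ : θl ≤ θu)
    (xl xu : ℝ → ℝ)
    (hxl : ∀ t ∈ Ici (0 : ℝ),
      HasDerivWithinAt xl (-θu * xl t - (θu - θl) * max (-(xl t)) 0 + dl) (Ici 0) t)
    (hxu : ∀ t ∈ Ici (0 : ℝ),
      HasDerivWithinAt xu (-θu * xu t + (θu - θl) * max (xu t) 0 + du) (Ici 0) t) :
    ∃ M : ℝ, ∀ t ∈ Ici (0 : ℝ), |xl t| ≤ M ∧ |xu t| ≤ M := by
  have hl := abs_le_max_of_dissipative hθl (abs_nonneg dl) hxl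
    (fun _ _ h => lowerField_le hθ h) (fun _ _ h => le_lowerField h)
  have hu := abs_le_max_of_dissipative hθl (abs_nonneg du) hxu
    (fun _ _ h => upperField_le h) (fun _ _ h => le_upperField hθ h)
  exact ⟨max (max |xl 0| (|dl| / θl)) (max |xu 0| (|du| / θl)), fun t ht =>
    ⟨(hl t ht).trans (le_max_left _ _), (hu t ht).trans (le_max_right _ _)⟩⟩

theorem stmt12 (θl θu dl du : ℝ) (hθl : 0 < θl) (hθ : θl ≤ θu) (hθ2 : θu < 2 * θl)
    (hd : dl ≤ du) (xl xu : ℝ → ℝ)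
    (hxl : ∀ t ∈ Ici (0 : ℝ),
      HasDerivWithinAt xl (-θu * xl t - (θu - θl) * max (-(xl t)) 0 + dl) (Ici 0) t)
    (hxu : ∀ t ∈ Ici (0 : ℝ),
      HasDerivWithinAt xu (-θu * xu t + (θu - θl) * max (xu t) 0 + du) (Ici 0) t) :
    ∃ M : ℝ, ∀ t ∈ Ici (0 : ℝ), |xl t| ≤ M ∧ |xu t| ≤ M :=
  stmt12_general θl θu dl du hθl hθ xl xu hxl hxu
end

section
/- Scalar interval predictor inclusion: let x solve ẋ = −θ(t)x + d(t) with θ(t) ∈ [θ̲, θ̄], 0 < θ̲ ≤ θ̄, d(t) ∈ [d̲, d̄]. Let x̲, x̄ solve ẋ̲ = −θ̄ x̲ − (θ̄ − θ̲)x̲⁻ + d̲ and x̄̇ = −θ̄ x̄ + (θ̄ − θ̲)x̄⁺ + d̄ with x̲(0) ≤ x(0) ≤ x̄(0). Then x̲(t) ≤ x(t) ≤ x̄(t) for all t ≥ 0. -/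
open Set

lemma nonpos_aux (f f' : ℝ → ℝ)
    (hf : ∀ t ∈ Ici (0 : ℝ), HasDerivWithinAt f (f' t) (Ici 0) t)
    (h0 : f 0 ≤ 0)
    (hb : ∀ t ∈ Ici (0 : ℝ), 0 ≤ f t → f' t ≤ 0) :
    ∀ t ∈ Ici (0 : ℝ), f t ≤ 0 := by
  intro b hb0
  have key : ∀ ε > 0, f b ≤ ε * Real.exp b := by
    intro ε hε
    have hB : ∀ s : ℝ, HasDerivAt (fun t => ε * Real.exp t) (ε * Real.exp s) s := by
      intro s
      simpa using (Real.hasDerivAt_exp s).const_mul ε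
    have hcont : ContinuousOn f (Icc 0 b) := fun t ht =>
      ((hf t ht.1).continuousWithinAt).mono (fun z hz => hz.1)
    have := image_le_of_deriv_right_lt_deriv_boundary (f' := f')
      (B := fun t => ε * Real.exp t) (B' := fun t => ε * Real.exp t)
      hcont
      (fun t ht => (hf t ht.1).mono (fun z hz => le_trans ht.1 hz))
      (by
        have hp : (0:ℝ) < ε * Real.exp 0 := by positivity
        simpa using h0.trans_lt hp |>.le)
      hB
      (fun t ht heq => by
        have hft : 0 ≤ f t := by
          rw [heq]; positivity
        exact lt_of_le_of_lt (hb t ht.1 hft) (by positivity))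
    exact this ⟨hb0, le_refl b⟩
  by_contra hlt
  push_neg at hlt
  have hεp : 0 < f b / Real.exp b / 2 := by positivity
  have := key _ hεp
  have hexp : (0:ℝ) < Real.exp b := Real.exp_pos b
  rw [div_mul_eq_mul_div, div_mul_eq_mul_div, mul_div_assoc, div_self (ne_of_gt hexp)] at this
  linarith

theorem stmt13 (θl θu : ℝ) (hθl : 0 < θl) (hθ : θl ≤ θu)
    (θ d dl du x xl xu : ℝ → ℝ)
    (hθmem : ∀ t ∈ Ici (0 : ℝ), θ t ∈ Icc θl θu)
    (hdmem : ∀ t ∈ Ici (0 : ℝ), d t ∈ Icc (dl t) (du t))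
    (hx : ∀ t ∈ Ici (0 : ℝ), HasDerivWithinAt x (-(θ t) * x t + d t) (Ici 0) t)
    (hxl : ∀ t ∈ Ici (0 : ℝ),
      HasDerivWithinAt xl (-θu * xl t - (θu - θl) * max (-(xl t)) 0 + dl t) (Ici 0) t)
    (hxu : ∀ t ∈ Ici (0 : ℝ),
      HasDerivWithinAt xu (-θu * xu t + (θu - θl) * max (xu t) 0 + du t) (Ici 0) t)
    (h0 : xl 0 ≤ x 0 ∧ x 0 ≤ xu 0) :
    ∀ t ∈ Ici (0 : ℝ), xl t ≤ x t ∧ x t ≤ xu t := by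
  have hlow : ∀ t ∈ Ici (0 : ℝ), xl t - x t ≤ 0 := by
    apply nonpos_aux (f' := fun t =>
      (-θu * xl t - (θu - θl) * max (-(xl t)) 0 + dl t) - (-(θ t) * x t + d t))
    · intro t ht
      exact (hxl t ht).sub (hx t ht)
    · linarith [h0.1]
    · intro t ht hpos
      obtain ⟨hθ1, hθ2⟩ := hθmem t ht
      obtain ⟨hd1, hd2⟩ := hdmem t ht
      rcases le_or_gt 0 (xl t) with h | h
      · rw [max_eq_right (by linarith)]
        nlinarith
      · rw [max_eq_left (by linarith)]
        nlinarith
  have hup : ∀ t ∈ Ici (0 : ℝ), x t - xu t ≤ 0 := by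
    apply nonpos_aux (f' := fun t =>
      (-(θ t) * x t + d t) - (-θu * xu t + (θu - θl) * max (xu t) 0 + du t))
    · intro t ht
      exact (hx t ht).sub (hxu t ht)
    · linarith [h0.2]
    · intro t ht hpos
      obtain ⟨hθ1, hθ2⟩ := hθmem t ht
      obtain ⟨hd1, hd2⟩ := hdmem t ht
      rcases le_or_gt 0 (xu t) with h | h
      · rw [max_eq_left h]
        nlinarith
      · rw [max_eq_right (le_of_lt h)]
        nlinarith
  intro t ht
  exact ⟨by linarith [hlow t ht], by linarith [hup t ht]⟩
end

section
/- Interval predictor inclusion (Theorem 1, part 1): let x solve ẋ = (A₀ + Σᵢ λᵢ(θ(t))ΔAᵢ)x + Bd(t) where A₀ is Metzler, λᵢ(θ(t)) ∈ [0,1] with Σᵢ λᵢ(θ(t)) = 1, and d̲(t) ≤ d(t) ≤ d̄(t). Let (x̲, x̄) solve ẋ̲ = A₀x̲ − ΔA₊x̲⁻ − ΔA₋x̄⁺ + B⁺d̲ − B⁻d̄ and x̄̇ = A₀x̄ + ΔA₊x̄⁺ + ΔA₋x̲⁻ + B⁺d̄ − B⁻d̲, with x̲(0) ≤ x(0) ≤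 x̄(0). Then x̲(t) ≤ x(t) ≤ x̄(t) for all t ≥ 0. -/
open Matrix Set

/-! The errors `x - xl` and `xu - x` solve an ODE `y' = G (t, y)` on `ℝⁿ × ℝⁿ` whose right-hand
side is Lipschitz in `y` and quasi-positive: on a face `{y ≥ 0, y i = 0}` of the orthant one has
`G i ≥ 0`, because the off-diagonal entries of `A₀` are nonnegative, `0 ≤ λ ≤ 1`, and
`dl ≤ d ≤ du`. Such a field leaves the orthant invariant: comparing `G (t, y)` with `G (t, y⁺)`
gives `y i' ≥ -K ‖y⁻‖` whenever `y i < 0`, so `v = ∑ (y i⁻)²` satisfies `v' ≤ C v` and `v 0 = 0`,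
and Grönwall's inequality forces `v = 0`. -/
open Filter Topology Asymptotics NNReal

theorem hasDerivAt_negPart_sq (s : ℝ) : HasDerivAt (fun r : ℝ => r⁻ ^ 2) (-(2 * s⁻)) s := by
  rcases lt_trichotomy s 0 with hs | rfl | hs
  · have h : (fun r : ℝ => r ^ 2) =ᶠ[𝓝 s] fun r => r⁻ ^ 2 := by
      filter_upwards [Iio_mem_nhds hs] with r hr
      rw [negPart_eq_neg.2 hr.le, neg_sq]
    rw [negPart_eq_neg.2 hs.le]
    simpa using (hasDerivAt_pow 2 s).congr_of_eventuallyEq h.symm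
  · rw [hasDerivAt_iff_isLittleO_nhds_zero]
    simp only [zero_add, negPart_zero, ne_eq, OfNat.ofNat_ne_zero, not_false_eq_true,
      zero_pow, sub_zero, mul_zero, neg_zero, smul_zero]
    refine (IsBigO.of_bound 1 (Eventually.of_forall fun h => ?_)).trans_isLittleO
      (isLittleO_pow_id one_lt_two)
    simp only [norm_pow, Real.norm_eq_abs, one_mul, abs_of_nonneg (negPart_nonneg h)]
    gcongr
    exact sup_le (neg_le_abs h) (abs_nonneg h)
  · have h : (fun _ : ℝ => (0 : ℝ)) =ᶠ[𝓝 s] fun r => r⁻ ^ 2 := by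
      filter_upwards [Ioi_mem_nhds hs] with r hr
      rw [negPart_eq_zero.2 hr.le, sq, mul_zero]
    rw [negPart_eq_zero.2 hs.le]
    simpa using (hasDerivAt_const s (0 : ℝ)).congr_of_eventuallyEq h.symm

theorem sq_norm_le_sum_sq {ι : Type*} [Fintype ι] (f : ι → ℝ) : ‖f‖ ^ 2 ≤ ∑ i, f i ^ 2 := by
  have h : ‖f‖ ≤ √(∑ i, f i ^ 2) := (pi_norm_le_iff_of_nonneg (Real.sqrt_nonneg _)).2 fun i =>
    Real.abs_le_sqrt (Finset.single_le_sum (f := fun i => f i ^ 2) (fun i _ => sq_nonneg _)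
      (Finset.mem_univ i))
  calc ‖f‖ ^ 2 ≤ √(∑ i, f i ^ 2) ^ 2 := by gcongr
    _ = ∑ i, f i ^ 2 := Real.sq_sqrt (Finset.sum_nonneg fun i _ => sq_nonneg _)

theorem nonneg_of_hasDerivWithinAt_of_neg_mul_norm_negPart_le {ι : Type*} [Fintype ι]
    {y y' : ℝ → ι → ℝ} {K : ℝ≥0} {a : ℝ} (hy : ∀ t ∈ Ici a, HasDerivWithinAt y (y' t) (Ici a) t)
    (hy' : ∀ t ∈ Ici a, ∀ i, y t i < 0 → -(K * ‖(y t)⁻‖) ≤ y' t i) (ha : 0 ≤ y a) :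
    ∀ t ∈ Ici a, 0 ≤ y t := by
  set v : ℝ → ℝ := fun t => ∑ i, (y t i)⁻ ^ 2
  set v' : ℝ → ℝ := fun t => ∑ i, -(2 * (y t i)⁻) * y' t i
  have hv : ∀ t ∈ Ici a, HasDerivWithinAt v (v' t) (Ici a) t := fun t ht =>
    HasDerivWithinAt.fun_sum fun i _ =>
      (hasDerivAt_negPart_sq _).comp_hasDerivWithinAt t (hasDerivWithinAt_pi.1 (hy t ht) i)
  have hv'_le : ∀ t ∈ Ici a, v' t ≤ 2 * K * Fintype.card ι * v t := by
    intro t ht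
    have hterm : ∀ i, -(2 * (y t i)⁻) * y' t i ≤ 2 * K * ‖(y t)⁻‖ ^ 2 := by
      intro i
      rcases lt_or_ge (y t i) 0 with hi | hi
      · have h1 : (y t i)⁻ ≤ ‖(y t)⁻‖ := by
          simpa [abs_of_nonneg (negPart_nonneg (y t i))] using norm_le_pi_norm (y t)⁻ i
        have h2 := hy' t ht i hi
        have h3 : 0 ≤ (y t i)⁻ := negPart_nonneg _
        have h4 : 0 ≤ (K : ℝ) * ‖(y t)⁻‖ := by positivity
        nlinarith [mul_le_mul_of_nonneg_left h2 h3, mul_le_mul_of_nonneg_left h1 h4]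
      · rw [negPart_eq_zero.2 hi]
        simp only [mul_zero, neg_zero, zero_mul]
        positivity
    calc v' t ≤ ∑ _i : ι, 2 * K * ‖(y t)⁻‖ ^ 2 := Finset.sum_le_sum fun i _ => hterm i
      _ = 2 * K * Fintype.card ι * ‖(y t)⁻‖ ^ 2 := by
        rw [Finset.sum_const, Finset.card_univ, nsmul_eq_mul]
        ring
      _ ≤ 2 * K * Fintype.card ι * v t := by
        gcongr
        exact sq_norm_le_sum_sq _
  intro T hT
  have hvT : v T ≤ 0 := by
    have h := le_gronwallBound_of_liminf_deriv_right_le (f' := v') (δ := 0) (ε := 0)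
      (fun t ht => (hv t ht.1).continuousWithinAt.mono Icc_subset_Ici_self)
      (fun t ht r hr => ((hv t ht.1).mono (Ici_subset_Ici.2 ht.1)).liminf_right_slope_le hr)
      (by simp [v, negPart_eq_zero.2 (ha _)]) (fun t ht => by simpa using hv'_le t ht.1)
      T ⟨hT, le_rfl⟩
    rwa [gronwallBound_ε0_δ0] at h
  intro i
  have hi : (y T i)⁻ ^ 2 = 0 := le_antisymm
    ((Finset.single_le_sum (f := fun i => (y T i)⁻ ^ 2) (fun i _ => sq_nonneg _)
      (Finset.mem_univ i)).trans hvT) (sq_nonneg _)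
  exact negPart_eq_zero.1 (pow_eq_zero_iff two_ne_zero |>.1 hi)

theorem nonneg_of_hasDerivWithinAt_of_quasipositive {ι : Type*} [Fintype ι]
    {G : ℝ → (ι → ℝ) → ι → ℝ} {y : ℝ → ι → ℝ} {K : ℝ≥0} {a : ℝ}
    (hG : ∀ t ∈ Ici a, ∀ i, LipschitzWith K fun z => G t z i)
    (hG_pos : ∀ t ∈ Ici a, ∀ z, 0 ≤ z → ∀ i, z i = 0 → 0 ≤ G t z i)
    (hy : ∀ t ∈ Ici a, HasDerivWithinAt y (G t (y t)) (Ici a) t) (ha : 0 ≤ y a) :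
    ∀ t ∈ Ici a, 0 ≤ y t := by
  refine nonneg_of_hasDerivWithinAt_of_neg_mul_norm_negPart_le (K := K) hy
    (fun t ht i hi => ?_) ha
  have hpos : 0 ≤ G t (y t)⁺ i :=
    hG_pos t ht _ (posPart_nonneg _) i (by simp [posPart_eq_zero.2 hi.le])
  have hdist : dist (y t) (y t)⁺ = ‖(y t)⁻‖ := by
    rw [dist_comm, dist_eq_norm,
      sub_eq_iff_eq_add'.2 (sub_eq_iff_eq_add.1 (posPart_sub_negPart (y t)))]
  have hlip := (hG t ht i).dist_le_mul (y t) (y t)⁺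
  rw [hdist, Real.dist_eq] at hlip
  linarith [neg_abs_le (G t (y t) i - G t (y t)⁺ i)]

theorem le_and_le_of_hasDerivWithinAt_of_lipschitzWith {ι : Type*} [Fintype ι]
    {F : ℝ → ι → ℝ} {L U : ℝ → (ι → ℝ) → (ι → ℝ) → ι → ℝ} {x xl xu : ℝ → ι → ℝ}
    {KL KU : ℝ≥0} {a : ℝ}
    (hL : ∀ t ∈ Ici a, LipschitzWith KL (Function.uncurry (L t)))
    (hU : ∀ t ∈ Ici a, LipschitzWith KU (Function.uncurry (U t)))
    (hLF : ∀ t ∈ Ici a, ∀ l u, l ≤ x t → x t ≤ u → ∀ i, l i = x t i → L t l u i ≤ F t i)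
    (hFU : ∀ t ∈ Ici a, ∀ l u, l ≤ x t → x t ≤ u → ∀ i, x t i = u i → F t i ≤ U t l u i)
    (hx : ∀ t ∈ Ici a, HasDerivWithinAt x (F t) (Ici a) t)
    (hxl : ∀ t ∈ Ici a, HasDerivWithinAt xl (L t (xl t) (xu t)) (Ici a) t)
    (hxu : ∀ t ∈ Ici a, HasDerivWithinAt xu (U t (xl t) (xu t)) (Ici a) t)
    (ha : xl a ≤ x a ∧ x a ≤ xu a) :
    ∀ t ∈ Ici a, xl t ≤ x t ∧ x t ≤ xu t := by
  -- The state `z` collects the errors `x - xl` and `xu - x`; `bounds t z` recovers `(xl, xu)`.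
  let bounds (t : ℝ) (z : ι ⊕ ι → ℝ) : (ι → ℝ) × (ι → ℝ) :=
    (x t - z ∘ Sum.inl, x t + z ∘ Sum.inr)
  let G (t : ℝ) (z : ι ⊕ ι → ℝ) : ι ⊕ ι → ℝ :=
    Sum.elim (F t - Function.uncurry (L t) (bounds t z))
      (Function.uncurry (U t) (bounds t z) - F t)
  have hrestrict (f : ι → ι ⊕ ι) : LipschitzWith 1 fun z : ι ⊕ ι → ℝ => z ∘ f :=
    LipschitzWith.of_dist_le_mul fun z z' => by
      rw [NNReal.coe_one, one_mul]
      exact (dist_pi_le_iff dist_nonneg).2 fun i => dist_le_pi_dist z z' (f i)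
  have hbounds (t : ℝ) : LipschitzWith 1 (bounds t) := by
    simpa using ((LipschitzWith.const (x t)).sub (hrestrict Sum.inl)).prodMk
      ((LipschitzWith.const (x t)).add (hrestrict Sum.inr))
  have hG : ∀ t ∈ Ici a, ∀ i, LipschitzWith (max KL KU) fun z => G t z i := by
    rintro t ht (i | i)
    · exact (((LipschitzWith.const (F t i)).sub
        ((LipschitzWith.eval i).comp ((hL t ht).comp (hbounds t)))).weaken (by simp))
    · exact ((((LipschitzWith.eval i).comp ((hU t ht).comp (hbounds t))).sub
        (LipschitzWith.const (F t i))).weaken (by simp))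
  have hG_pos : ∀ t ∈ Ici a, ∀ z, 0 ≤ z → ∀ i, z i = 0 → 0 ≤ G t z i := by
    intro t ht z hz
    have hl : x t - z ∘ Sum.inl ≤ x t := sub_le_self _ fun j => hz _
    have hu : x t ≤ x t + z ∘ Sum.inr := le_add_of_nonneg_right fun j => hz _
    rintro (i | i) hi
    · simpa [G, bounds] using hLF t ht _ _ hl hu i (by simp [hi])
    · simpa [G, bounds] using hFU t ht _ _ hl hu i (by simp [hi])
  have hy : ∀ t ∈ Ici a, HasDerivWithinAt (fun t => Sum.elim (x t - xl t) (xu t - x t))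
      (G t (Sum.elim (x t - xl t) (xu t - x t))) (Ici a) t := by
    intro t ht
    refine hasDerivWithinAt_pi.2 ?_
    rintro (i | i)
    · simpa [G, bounds] using hasDerivWithinAt_pi.1 ((hx t ht).sub (hxl t ht)) i
    · simpa [G, bounds] using hasDerivWithinAt_pi.1 ((hxu t ht).sub (hx t ht)) i
  have hy_nonneg := nonneg_of_hasDerivWithinAt_of_quasipositive hG hG_pos hy
    (by rintro (i | i) <;> simp [ha.1 i, ha.2 i])
  intro t ht
  exact ⟨fun i => by simpa using hy_nonneg t ht (Sum.inl i),
    fun i => by simpa using hy_nonneg t ht (Sum.inr i)⟩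

section IntervalPredictor

variable {n m : ℕ} {κ : Type*} [Fintype κ]

theorem vecPos_nonneg (v : Fin n → ℝ) : 0 ≤ vecPos v := fun _ => le_max_right _ _

theorem le_vecPos (v : Fin n → ℝ) : v ≤ vecPos v := fun _ => le_max_left _ _

theorem vecNeg_nonneg (v : Fin n → ℝ) : 0 ≤ vecNeg v := sub_nonneg.2 (le_vecPos v)

theorem add_vecNeg (v : Fin n → ℝ) : v + vecNeg v = vecPos v := add_sub_cancel v (vecPos v)

theorem add_vecNeg_nonneg_of_le {v w : Fin n → ℝ} (hvw : v ≤ w) : 0 ≤ w + vecNeg v :=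
  (vecPos_nonneg v).trans (by rw [← add_vecNeg]; gcongr)

theorem lipschitzWith_vecPos : LipschitzWith 1 (vecPos : (Fin n → ℝ) → Fin n → ℝ) :=
  LipschitzWith.of_dist_le_mul fun u v => by
    rw [NNReal.coe_one, one_mul]
    exact (dist_pi_le_iff dist_nonneg).2 fun i =>
      (lipschitzWith_posPart.dist_le_mul (u i) (v i)).trans (by simpa using dist_le_pi_dist u v i)

theorem lipschitzWith_vecNeg : LipschitzWith 2 (vecNeg : (Fin n → ℝ) → Fin n → ℝ) :=
  (lipschitzWith_vecPos.sub LipschitzWith.id).weaken (by norm_num)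

theorem matPos_nonneg (M : Matrix (Fin n) (Fin m) ℝ) (i : Fin n) (j : Fin m) :
    0 ≤ matPos M i j :=
  le_max_right _ _

theorem matNeg_nonneg (M : Matrix (Fin n) (Fin m) ℝ) (i : Fin n) (j : Fin m) :
    0 ≤ matNeg M i j :=
  sub_nonneg.2 (le_max_left _ _)

theorem matPos_sub_matNeg (M : Matrix (Fin n) (Fin m) ℝ) : matPos M - matNeg M = M :=
  sub_sub_cancel _ _

theorem exists_lipschitzWith_mulVec (M : Matrix (Fin n) (Fin m) ℝ) :
    ∃ K, LipschitzWith K (M *ᵥ ·) :=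
  ⟨_, (LinearMap.toContinuousLinearMap (Matrix.mulVecLin M)).lipschitz⟩

theorem mulVec_nonneg_of_nonneg {M : Matrix (Fin n) (Fin m) ℝ} (hM : ∀ i j, 0 ≤ M i j)
    {v : Fin m → ℝ} (hv : 0 ≤ v) : 0 ≤ M *ᵥ v :=
  fun i => dotProduct_nonneg_of_nonneg (hM i) hv

theorem mulVec_mono_of_nonneg {M : Matrix (Fin n) (Fin m) ℝ} (hM : ∀ i j, 0 ≤ M i j)
    {u v : Fin m → ℝ} (huv : u ≤ v) : M *ᵥ u ≤ M *ᵥ v := by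
  simpa only [mulVec_sub, sub_nonneg] using mulVec_nonneg_of_nonneg hM (sub_nonneg.2 huv)

theorem Metzler.mulVec_apply_nonneg {A : Matrix (Fin n) (Fin n) ℝ} (hA : Metzler A)
    {v : Fin n → ℝ} (hv : 0 ≤ v) {i : Fin n} (hi : v i = 0) : 0 ≤ (A *ᵥ v) i := by
  rw [mulVec, dotProduct]
  refine Finset.sum_nonneg fun j _ => ?_
  rcases eq_or_ne i j with rfl | hij
  · simp [hi]
  · exact mul_nonneg (hA i j hij) (hv j)

theorem matPos_mulVec_sub_matNeg_mulVec_le {B : Matrix (Fin n) (Fin m) ℝ}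
    {d dl du : Fin m → ℝ} (hd : dl ≤ d ∧ d ≤ du) :
    matPos B *ᵥ dl - matNeg B *ᵥ du ≤ B *ᵥ d ∧ B *ᵥ d ≤ matPos B *ᵥ du - matNeg B *ᵥ dl := by
  have hB : B *ᵥ d = matPos B *ᵥ d - matNeg B *ᵥ d := by rw [← sub_mulVec, matPos_sub_matNeg]
  rw [hB]
  exact ⟨sub_le_sub (mulVec_mono_of_nonneg (matPos_nonneg B) hd.1)
      (mulVec_mono_of_nonneg (matNeg_nonneg B) hd.2),
    sub_le_sub (mulVec_mono_of_nonneg (matPos_nonneg B) hd.2)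
      (mulVec_mono_of_nonneg (matNeg_nonneg B) hd.1)⟩

theorem smul_mulVec_add_matPos_matNeg_nonneg (M : Matrix (Fin n) (Fin m) ℝ)
    {c : ℝ} (hc : c ∈ Icc (0 : ℝ) 1) {v p q : Fin m → ℝ} (hp : 0 ≤ p) (hq : 0 ≤ q)
    (hvp : 0 ≤ v + p) (hqv : 0 ≤ q - v) :
    0 ≤ c • (M *ᵥ v) + matPos M *ᵥ p + matNeg M *ᵥ q := by
  have hM : M *ᵥ v = matPos M *ᵥ v - matNeg M *ᵥ v := by rw [← sub_mulVec, matPos_sub_matNeg]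
  have hsplit : c • (M *ᵥ v) + matPos M *ᵥ p + matNeg M *ᵥ q =
      c • (matPos M *ᵥ (v + p)) + (1 - c) • (matPos M *ᵥ p) +
        (c • (matNeg M *ᵥ (q - v)) + (1 - c) • (matNeg M *ᵥ q)) := by
    simp only [hM, mulVec_add, mulVec_sub, smul_sub, smul_add, sub_smul, one_smul]
    abel
  have hc' : 0 ≤ 1 - c := sub_nonneg.2 hc.2
  have hP {w : Fin m → ℝ} (hw : 0 ≤ w) := mulVec_nonneg_of_nonneg (matPos_nonneg M) hw
  have hN {w : Fin m → ℝ} (hw : 0 ≤ w) := mulVec_nonneg_of_nonneg (matNeg_nonneg M) hw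
  rw [hsplit]
  exact add_nonneg (add_nonneg (smul_nonneg hc.1 (hP hvp)) (smul_nonneg hc' (hP hp)))
    (add_nonneg (smul_nonneg hc.1 (hN hqv)) (smul_nonneg hc' (hN hq)))

theorem sum_smul_mulVec_add_matPos_matNeg_nonneg
    (ΔA : κ → Matrix (Fin n) (Fin m) ℝ) {lam : κ → ℝ} (hlam : ∀ k, lam k ∈ Icc (0 : ℝ) 1)
    {v p q : Fin m → ℝ} (hp : 0 ≤ p) (hq : 0 ≤ q) (hvp : 0 ≤ v + p) (hqv : 0 ≤ q - v) :
    0 ≤ (∑ k, lam k • ΔA k) *ᵥ v + (∑ k, matPos (ΔA k)) *ᵥ p + (∑ k, matNeg (ΔA k)) *ᵥ q := by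
  simp only [sum_mulVec, smul_mulVec, ← Finset.sum_add_distrib]
  exact Finset.sum_nonneg fun k _ =>
    smul_mulVec_add_matPos_matNeg_nonneg (ΔA k) (hlam k) hp hq hvp hqv

variable (A₀ : Matrix (Fin n) (Fin n) ℝ) (ΔA : κ → Matrix (Fin n) (Fin n) ℝ)
  (B : Matrix (Fin n) (Fin m) ℝ)

noncomputable def lowerRate (dl du : Fin m → ℝ) (l u : Fin n → ℝ) : Fin n → ℝ :=
  A₀ *ᵥ l - (∑ k, matPos (ΔA k)) *ᵥ vecNeg l - (∑ k, matNeg (ΔA k)) *ᵥ vecPos u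
    + matPos B *ᵥ dl - matNeg B *ᵥ du

noncomputable def upperRate (dl du : Fin m → ℝ) (l u : Fin n → ℝ) : Fin n → ℝ :=
  A₀ *ᵥ u + (∑ k, matPos (ΔA k)) *ᵥ vecPos u + (∑ k, matNeg (ΔA k)) *ᵥ vecNeg l
    + matPos B *ᵥ du - matNeg B *ᵥ dl

theorem exists_lipschitzWith_lowerRate :
    ∃ K, ∀ dl du, LipschitzWith K (Function.uncurry (lowerRate A₀ ΔA B dl du)) := by
  obtain ⟨K₀, h₀⟩ := exists_lipschitzWith_mulVec A₀
  obtain ⟨KP, hP⟩ := exists_lipschitzWith_mulVec (∑ k, matPos (ΔA k))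
  obtain ⟨KQ, hQ⟩ := exists_lipschitzWith_mulVec (∑ k, matNeg (ΔA k))
  exact ⟨_, fun dl du => ((((h₀.comp LipschitzWith.prod_fst).sub
    ((hP.comp lipschitzWith_vecNeg).comp LipschitzWith.prod_fst)).sub
    ((hQ.comp lipschitzWith_vecPos).comp LipschitzWith.prod_snd)).add
    (LipschitzWith.const (matPos B *ᵥ dl))).sub (LipschitzWith.const (matNeg B *ᵥ du))⟩

theorem exists_lipschitzWith_upperRate :
    ∃ K, ∀ dl du, LipschitzWith K (Function.uncurry (upperRate A₀ ΔA B dl du)) := by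
  obtain ⟨K₀, h₀⟩ := exists_lipschitzWith_mulVec A₀
  obtain ⟨KP, hP⟩ := exists_lipschitzWith_mulVec (∑ k, matPos (ΔA k))
  obtain ⟨KQ, hQ⟩ := exists_lipschitzWith_mulVec (∑ k, matNeg (ΔA k))
  exact ⟨_, fun dl du => ((((h₀.comp LipschitzWith.prod_snd).add
    ((hP.comp lipschitzWith_vecPos).comp LipschitzWith.prod_snd)).add
    ((hQ.comp lipschitzWith_vecNeg).comp LipschitzWith.prod_fst)).add
    (LipschitzWith.const (matPos B *ᵥ du))).sub (LipschitzWith.const (matNeg B *ᵥ dl))⟩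

variable {A₀ ΔA B} {lam : κ → ℝ} {d dl du : Fin m → ℝ} {x l u : Fin n → ℝ}

theorem lowerRate_apply_le (hA₀ : Metzler A₀) (hlam : ∀ k, lam k ∈ Icc (0 : ℝ) 1)
    (hd : dl ≤ d ∧ d ≤ du) (hl : l ≤ x) (hu : x ≤ u) {i : Fin n} (hi : l i = x i) :
    lowerRate A₀ ΔA B dl du l u i ≤ ((A₀ + ∑ k, lam k • ΔA k) *ᵥ x + B *ᵥ d) i := by
  have hA := hA₀.mulVec_apply_nonneg (sub_nonneg.2 hl) (sub_eq_zero.2 hi.symm)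
  have hΔ := sum_smul_mulVec_add_matPos_matNeg_nonneg ΔA hlam
    (vecNeg_nonneg l) (vecPos_nonneg u)
    (add_vecNeg_nonneg_of_le hl)
    (sub_nonneg.2 (hu.trans (le_vecPos u))) i
  have hB := (matPos_mulVec_sub_matNeg_mulVec_le (B := B) hd).1 i
  simp only [lowerRate, add_mulVec, mulVec_sub, Pi.add_apply, Pi.sub_apply, Pi.zero_apply]
    at hA hΔ hB ⊢
  linarith

theorem apply_le_upperRate (hA₀ : Metzler A₀) (hlam : ∀ k, lam k ∈ Icc (0 : ℝ) 1)
    (hd : dl ≤ d ∧ d ≤ du) (hl : l ≤ x) (hu : x ≤ u) {i : Fin n} (hi : x i = u i) :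
    ((A₀ + ∑ k, lam k • ΔA k) *ᵥ x + B *ᵥ d) i ≤ upperRate A₀ ΔA B dl du l u i := by
  have hA := hA₀.mulVec_apply_nonneg (sub_nonneg.2 hu) (sub_eq_zero.2 hi.symm)
  have hΔ := sum_smul_mulVec_add_matPos_matNeg_nonneg ΔA hlam
    (v := -x) (vecPos_nonneg u) (vecNeg_nonneg l)
    (by rw [neg_add_eq_sub]; exact sub_nonneg.2 (hu.trans (le_vecPos u)))
    (by rw [sub_neg_eq_add, add_comm]; exact add_vecNeg_nonneg_of_le hl) i
  have hB := (matPos_mulVec_sub_matNeg_mulVec_le (B := B) hd).2 i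
  simp only [upperRate, add_mulVec, mulVec_sub, mulVec_neg, Pi.add_apply, Pi.sub_apply,
    Pi.neg_apply, Pi.zero_apply] at hA hΔ hB ⊢
  linarith

end IntervalPredictor

theorem stmt14_general {n m N : ℕ} (A₀ : Matrix (Fin n) (Fin n) ℝ)
    (ΔA : Fin N → Matrix (Fin n) (Fin n) ℝ) (B : Matrix (Fin n) (Fin m) ℝ)
    (lam : ℝ → Fin N → ℝ) (d dl du : ℝ → Fin m → ℝ) (x xl xu : ℝ → Fin n → ℝ)
    (hA₀ : Metzler A₀)
    (hlam : ∀ t ∈ Ici (0 : ℝ), ∀ i, lam t i ∈ Icc (0 : ℝ) 1)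
    (hd : ∀ t ∈ Ici (0 : ℝ), dl t ≤ d t ∧ d t ≤ du t)
    (hx : ∀ t ∈ Ici (0 : ℝ),
      HasDerivWithinAt x ((A₀ + ∑ i, lam t i • ΔA i).mulVec (x t) + B.mulVec (d t)) (Ici 0) t)
    (hxl : ∀ t ∈ Ici (0 : ℝ),
      HasDerivWithinAt xl
        (A₀.mulVec (xl t) - (∑ i, matPos (ΔA i)).mulVec (vecNeg (xl t))
          - (∑ i, matNeg (ΔA i)).mulVec (vecPos (xu t))
          + (matPos B).mulVec (dl t) - (matNeg B).mulVec (du t)) (Ici 0) t)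
    (hxu : ∀ t ∈ Ici (0 : ℝ),
      HasDerivWithinAt xu
        (A₀.mulVec (xu t) + (∑ i, matPos (ΔA i)).mulVec (vecPos (xu t))
          + (∑ i, matNeg (ΔA i)).mulVec (vecNeg (xl t))
          + (matPos B).mulVec (du t) - (matNeg B).mulVec (dl t)) (Ici 0) t)
    (h0 : xl 0 ≤ x 0 ∧ x 0 ≤ xu 0) :
    ∀ t ∈ Ici (0 : ℝ), xl t ≤ x t ∧ x t ≤ xu t := by
  obtain ⟨KL, hL⟩ := exists_lipschitzWith_lowerRate A₀ ΔA B
  obtain ⟨KU, hU⟩ := exists_lipschitzWith_upperRate A₀ ΔA B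
  exact le_and_le_of_hasDerivWithinAt_of_lipschitzWith
    (L := fun t => lowerRate A₀ ΔA B (dl t) (du t))
    (U := fun t => upperRate A₀ ΔA B (dl t) (du t))
    (fun t _ => hL _ _) (fun t _ => hU _ _)
    (fun t ht _ _ hl hu _ hi => lowerRate_apply_le hA₀ (hlam t ht) (hd t ht) hl hu hi)
    (fun t ht _ _ hl hu _ hi => apply_le_upperRate hA₀ (hlam t ht) (hd t ht) hl hu hi)
    hx hxl hxu h0

theorem stmt14 {n m N : ℕ} (A₀ : Matrix (Fin n) (Fin n) ℝ)
    (ΔA : Fin N → Matrix (Fin n) (Fin n) ℝ) (B : Matrix (Fin n) (Fin m) ℝ)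
    (lam : ℝ → Fin N → ℝ) (d dl du : ℝ → Fin m → ℝ) (x xl xu : ℝ → Fin n → ℝ)
    (hA₀ : Metzler A₀)
    (hlam : ∀ t ∈ Ici (0 : ℝ), ∀ i, lam t i ∈ Icc (0 : ℝ) 1)
    (hsum : ∀ t ∈ Ici (0 : ℝ), ∑ i, lam t i = 1)
    (hd : ∀ t ∈ Ici (0 : ℝ), dl t ≤ d t ∧ d t ≤ du t)
    (hx : ∀ t ∈ Ici (0 : ℝ),
      HasDerivWithinAt x ((A₀ + ∑ i, lam t i • ΔA i).mulVec (x t) + B.mulVec (d t)) (Ici 0) t)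
    (hxl : ∀ t ∈ Ici (0 : ℝ),
      HasDerivWithinAt xl
        (A₀.mulVec (xl t) - (∑ i, matPos (ΔA i)).mulVec (vecNeg (xl t))
          - (∑ i, matNeg (ΔA i)).mulVec (vecPos (xu t))
          + (matPos B).mulVec (dl t) - (matNeg B).mulVec (du t)) (Ici 0) t)
    (hxu : ∀ t ∈ Ici (0 : ℝ),
      HasDerivWithinAt xu
        (A₀.mulVec (xu t) + (∑ i, matPos (ΔA i)).mulVec (vecPos (xu t))
          + (∑ i, matNeg (ΔA i)).mulVec (vecNeg (xl t))
          + (matPos B).mulVec (du t) - (matNeg B).mulVec (dl t)) (Ici 0) t)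
    (h0 : xl 0 ≤ x 0 ∧ x 0 ≤ xu 0) :
    ∀ t ∈ Ici (0 : ℝ), xl t ≤ x t ∧ x t ≤ xu t :=
  stmt14_general A₀ ΔA B lam d dl du x xl xu hA₀ hlam hd hx hxl hxu h0
end

section
/- A Metzler matrix A ∈ ℝ^{n×n} is Hurwitz if and only if there exists a diagonal matrix P ≻ 0 such that AᵀP + PA ≺ 0. -/
open Matrix

/-- A real matrix is Hurwitz if all its (complex) eigenvalues have negative real part. -/
def Hurwitz {n : ℕ} (A : Matrix (Fin n) (Fin n) ℝ) : Prop :=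
  ∀ μ ∈ spectrum ℂ (A.map (algebraMap ℝ ℂ)), μ.re < 0

/-!
Lyapunov's argument gives `←` for every real `A` and every `P ≻ 0`: if `A x = μ x` with `x ≠ 0`,
then `x* (AᵀP + PA) x = 2 Re μ · x* P x`.

For `→`, a Metzler Hurwitz `A` admits `v > 0` with `A v < 0`. For small `t > 0` the matrix
`T = 1 + t A` is entrywise nonnegative with spectrum in the open unit disc, so by Gelfand's formula
the Neumann series `N = ∑ Tᵏ` converges; then `A N = -t⁻¹ • 1` and `v = N 1 ≥ 1`. Doing the same
for `Aᵀ` gives `u`, and `P = diag (u / v)` works: `S = AᵀP + PA` is symmetric and Metzler with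
`S v = Aᵀ u + P A v < 0`, and such an `S` is negative definite because, writing `x = v y`,
`xᵀ S x = ∑ᵢ vᵢ yᵢ² (S v)ᵢ - ½ ∑ᵢⱼ Sᵢⱼ vᵢ vⱼ (yᵢ - yⱼ)²`.
-/

open Filter Topology
open scoped ComplexOrder

namespace spectrum

theorem exists_eq_one_add_mul {𝕜 A : Type*} [Field 𝕜] [Ring A] [Algebra 𝕜 A] {a : A}
    {c : 𝕜} (hc : c ≠ 0) {z : 𝕜} (hz : z ∈ spectrum 𝕜 (1 + c • a)) :
    ∃ μ ∈ spectrum 𝕜 a, z = 1 + c * μ := by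
  refine ⟨c⁻¹ * (z - 1), ?_, by field_simp; ring⟩
  rw [← sub_add_cancel z 1, ← map_one (algebraMap 𝕜 A), add_mem_add_iff] at hz
  rw [← smul_mem_smul_iff (r := Units.mk0 c hc)]
  simpa [Units.smul_def, hc] using hz

section Complex

variable {A : Type*} [NormedRing A] [NormedAlgebra ℂ A] [CompleteSpace A] {a : A}

theorem spectralRadius_lt_one_of_forall_norm_lt_one (h : ∀ z ∈ spectrum ℂ a, ‖z‖ < 1) :
    spectralRadius ℂ a < 1 := by
  rcases (spectrum ℂ a).eq_empty_or_nonempty with he | hne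
  · simp [spectralRadius, he]
  · exact_mod_cast spectralRadius_lt_of_forall_lt_of_nonempty hne (r := 1)
      fun z hz => by exact_mod_cast h z hz

theorem summable_pow_of_spectralRadius_lt_one (h : spectralRadius ℂ a < 1) :
    Summable (a ^ ·) := by
  obtain ⟨r, hρr, hr1⟩ := ENNReal.lt_iff_exists_nnreal_btwn.1 h
  refine .of_norm_bounded_eventually_nat (g := fun k => (r : ℝ) ^ k)
    (summable_geometric_of_lt_one r.2 (by exact_mod_cast hr1)) ?_
  filter_upwards [(pow_nnnorm_pow_one_div_tendsto_nhds_spectralRadius a).eventually_lt_const hρr,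
    eventually_gt_atTop 0] with k hk hk0
  rw [one_div, ENNReal.rpow_inv_lt_iff (by positivity), ENNReal.rpow_natCast] at hk
  exact_mod_cast hk.le

end Complex

end spectrum

theorem Complex.eventually_norm_one_add_mul_lt_one {μ : ℂ} (hμ : μ.re < 0) :
    ∀ᶠ t : ℝ in 𝓝[>] 0, ‖1 + t * μ‖ < 1 := by
  have h : Tendsto (fun t : ℝ => 2 * μ.re + t * ‖μ‖ ^ 2) (𝓝[>] 0) (𝓝 (2 * μ.re)) :=
    ((continuous_const.add (continuous_id.mul continuous_const)).tendsto' 0 _ (by simp)).mono_left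
      nhdsWithin_le_nhds
  filter_upwards [self_mem_nhdsWithin, h.eventually_lt_const (by linarith)] with t (ht : 0 < t) hneg
  have hsq : ‖1 + t * μ‖ ^ 2 = 1 + t * (2 * μ.re + t * ‖μ‖ ^ 2) := by
    simp only [Complex.sq_norm, Complex.normSq_apply, Complex.add_re, Complex.one_re,
      Complex.mul_re, Complex.ofReal_re, Complex.ofReal_im, zero_mul, sub_zero, Complex.add_im,
      Complex.one_im, Complex.mul_im, add_zero, zero_add]
    ring
  rw [← pow_lt_one_iff_of_nonneg (norm_nonneg _) two_ne_zero, hsq]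
  nlinarith

namespace Matrix

variable {ι : Type*} [Fintype ι]

theorem spectrum_transpose [DecidableEq ι] {K : Type*} [Field K] (M : Matrix ι ι K) :
    spectrum K Mᵀ = spectrum K M := by
  ext; simp [mem_spectrum_iff_isRoot_charpoly, charpoly_transpose]

theorem one_le_tsum_pow_mulVec_one [DecidableEq ι] {T : Matrix ι ι ℝ} (hT : ∀ i j, 0 ≤ T i j)
    (hs : Summable (T ^ ·)) (i : ι) : 1 ≤ ((∑' k, T ^ k) *ᵥ 1) i := by
  have h : HasSum (fun k => ((T ^ k) *ᵥ 1) i) (((∑' k, T ^ k) *ᵥ 1) i) := by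
    simp only [mulVec, dotProduct, Pi.one_apply, mul_one]
    exact hasSum_sum fun j _ => Pi.hasSum.1 (Pi.hasSum.1 hs.hasSum i) j
  simpa using le_hasSum h 0 fun k _ =>
    Finset.sum_nonneg fun j _ => mul_nonneg (pow_apply_nonneg hT k i j) zero_le_one

theorem two_mul_dotProduct_mulVec_mul {R : Type*} [CommRing R] {S : Matrix ι ι R} (hS : S.IsSymm)
    (v y : ι → R) :
    2 * ((v * y) ⬝ᵥ (S *ᵥ (v * y))) =
      2 * ∑ i, v i * y i ^ 2 * (S *ᵥ v) i - ∑ i, ∑ j, S i j * v i * v j * (y i - y j) ^ 2 := by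
  have hQ : (v * y) ⬝ᵥ (S *ᵥ (v * y)) = ∑ i, ∑ j, S i j * v i * v j * (y i * y j) := by
    simp only [dotProduct, mulVec, Pi.mul_apply, Finset.mul_sum]
    exact Finset.sum_congr rfl fun i _ => Finset.sum_congr rfl fun j _ => by ring
  have hD : ∑ i, v i * y i ^ 2 * (S *ᵥ v) i = ∑ i, ∑ j, S i j * v i * v j * y i ^ 2 := by
    simp only [dotProduct, mulVec, Finset.mul_sum]
    exact Finset.sum_congr rfl fun i _ => Finset.sum_congr rfl fun j _ => by ring
  have hswap : ∑ i, ∑ j, S i j * v i * v j * y j ^ 2 = ∑ i, ∑ j, S i j * v i * v j * y i ^ 2 := by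
    rw [Finset.sum_comm]
    exact Finset.sum_congr rfl fun i _ => Finset.sum_congr rfl fun j _ => by rw [hS.apply]; ring
  have hexpand : ∑ i, ∑ j, S i j * v i * v j * (y i - y j) ^ 2 =
      ∑ i, ∑ j, S i j * v i * v j * y i ^ 2 + ∑ i, ∑ j, S i j * v i * v j * y j ^ 2
        - 2 * ∑ i, ∑ j, S i j * v i * v j * (y i * y j) := by
    simp only [Finset.mul_sum, ← Finset.sum_add_distrib, ← Finset.sum_sub_distrib]
    exact Finset.sum_congr rfl fun i _ => Finset.sum_congr rfl fun j _ => by ring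
  rw [hexpand, hswap, hQ, hD]
  ring

theorem posDef_neg_of_mulVec_neg {S : Matrix ι ι ℝ} (hS : S.IsSymm)
    (hoff : ∀ i j, i ≠ j → 0 ≤ S i j) {v : ι → ℝ} (hv : ∀ i, 0 < v i)
    (hSv : ∀ i, (S *ᵥ v) i < 0) : (-S).PosDef := by
  refine .of_dotProduct_mulVec_pos (by simp [IsHermitian, hS.eq]) fun x hx => ?_
  set y := x / v
  have hxy : x = v * y := by ext i; simp [y, mul_div_cancel₀ _ (hv i).ne']
  obtain ⟨i₀, hi₀⟩ : ∃ i, y i ≠ 0 := by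
    by_contra! h
    exact hx (by rw [hxy]; ext i; simp [h i])
  have hdiag : ∑ i, v i * y i ^ 2 * (S *ᵥ v) i < 0 := by
    refine neg_pos.1 ?_
    rw [← Finset.sum_neg_distrib]
    refine Finset.sum_pos' (fun i _ => ?_) ⟨i₀, Finset.mem_univ _, ?_⟩
    · rw [neg_mul_eq_mul_neg]
      exact mul_nonneg (mul_nonneg (hv i).le (sq_nonneg _)) (neg_nonneg.2 (hSv i).le)
    · rw [neg_mul_eq_mul_neg]
      exact mul_pos (mul_pos (hv i₀) (by positivity)) (neg_pos.2 (hSv i₀))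
  have hcross : 0 ≤ ∑ i, ∑ j, S i j * v i * v j * (y i - y j) ^ 2 := by
    refine Finset.sum_nonneg fun i _ => Finset.sum_nonneg fun j _ => ?_
    rcases eq_or_ne i j with rfl | hij
    · simp
    · have := hoff i j hij; have := hv i; have := hv j; positivity
  have := two_mul_dotProduct_mulVec_mul hS v y
  rw [star_trivial, neg_mulVec, dotProduct_neg, hxy]
  linarith

theorem summable_pow_of_forall_spectrum_map_lt_one [DecidableEq ι] {T : Matrix ι ι ℝ}
    (h : ∀ z ∈ spectrum ℂ (T.map (algebraMap ℝ ℂ)), ‖z‖ < 1) : Summable (T ^ ·) := by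
  -- an auxiliary Banach algebra norm; it induces the product topology in which we sum
  let := Matrix.linftyOpNormedRing (n := ι) (α := ℂ)
  let := Matrix.linftyOpNormedAlgebra (n := ι) (R := ℂ) (α := ℂ)
  have hC := spectrum.summable_pow_of_spectralRadius_lt_one
    (spectrum.spectralRadius_lt_one_of_forall_norm_lt_one h)
  simp only [← Matrix.map_pow] at hC
  refine Pi.summable.2 fun i => Pi.summable.2 fun j => ?_
  exact Complex.summable_ofReal.1 (Pi.summable.1 (Pi.summable.1 hC i) j)

open Complex in
theorem PosDef.map_ofReal {M : Matrix ι ι ℝ} (hM : M.PosDef) :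
    (M.map (algebraMap ℝ ℂ)).PosDef := by
  have hsymm : M.IsSymm := by simpa using hM.isHermitian
  refine .of_dotProduct_mulVec_pos ?_ fun x hx => ?_
  · rw [IsHermitian, ← conjTranspose_map _ (fun r => by simp), hM.isHermitian.eq]
  set a : ι → ℝ := fun i => (x i).re
  set b : ι → ℝ := fun i => (x i).im
  have hx' : x = (ofRealHom ∘ a) + I • (ofRealHom ∘ b) := by
    funext i; apply Complex.ext <;> simp [a, b]
  have hsx : star x = (ofRealHom ∘ a) - I • (ofRealHom ∘ b) := by
    funext i; apply Complex.ext <;> simp [a, b]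
  have hMC : ∀ w : ι → ℝ,
      M.map (algebraMap ℝ ℂ) *ᵥ (ofRealHom ∘ w) = ofRealHom ∘ (M *ᵥ w) := by
    intro w; ext i; exact (RingHom.map_mulVec ofRealHom M w i).symm
  have hdot : ∀ u w : ι → ℝ,
      (ofRealHom ∘ u) ⬝ᵥ (ofRealHom ∘ w) = ((u ⬝ᵥ w : ℝ) : ℂ) := by
    intro u w; exact (RingHom.map_dotProduct ofRealHom u w).symm
  have hab : a ⬝ᵥ (M *ᵥ b) = b ⬝ᵥ (M *ᵥ a) := by
    rw [dotProduct_mulVec, ← mulVec_transpose, hsymm.eq, dotProduct_comm]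
  have key : star x ⬝ᵥ (M.map (algebraMap ℝ ℂ) *ᵥ x) =
      ((a ⬝ᵥ (M *ᵥ a) + b ⬝ᵥ (M *ᵥ b) : ℝ) : ℂ) := by
    conv_lhs => rw [hsx]; rw [hx']
    simp only [mulVec_add, mulVec_smul, hMC, sub_dotProduct, dotProduct_add, smul_dotProduct,
      dotProduct_smul, hdot, hab, smul_eq_mul]
    push_cast
    linear_combination -((b ⬝ᵥ (M *ᵥ b) : ℝ) : ℂ) * I_mul_I
  have hpos : ∀ w : ι → ℝ, w ≠ 0 → 0 < w ⬝ᵥ (M *ᵥ w) := fun w hw => by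
    simpa using hM.dotProduct_mulVec_pos hw
  have hnonneg : ∀ w : ι → ℝ, 0 ≤ w ⬝ᵥ (M *ᵥ w) := fun w => by
    simpa using hM.posSemidef.dotProduct_mulVec_nonneg w
  rw [key, Complex.zero_lt_real]
  by_cases ha : a = 0
  · have hb : b ≠ 0 := fun hb => hx (by rw [hx', ha, hb]; ext; simp)
    linarith [hnonneg a, hpos b hb]
  · linarith [hpos a ha, hnonneg b]

end Matrix

section

variable {n : ℕ} {A : Matrix (Fin n) (Fin n) ℝ}

theorem Metzler.transpose (hA : Metzler A) : Metzler Aᵀ :=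
  fun i j hij => hA j i hij.symm

theorem Hurwitz.transpose (hA : Hurwitz A) : Hurwitz Aᵀ := by
  intro μ hμ
  rw [transpose_map, spectrum_transpose] at hμ
  exact hA μ hμ

theorem Metzler.exists_one_add_smul_nonneg_spectrum_lt_one (hA : Metzler A) (hH : Hurwitz A) :
    ∃ t : ℝ, 0 < t ∧ (∀ i j, 0 ≤ (1 + t • A) i j) ∧
      ∀ z ∈ spectrum ℂ ((1 + t • A).map (algebraMap ℝ ℂ)), ‖z‖ < 1 := by
  have hspec : ∀ᶠ t : ℝ in 𝓝[>] 0, ∀ μ ∈ spectrum ℂ (A.map (algebraMap ℝ ℂ)), ‖1 + t * μ‖ < 1 :=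
    (finite_spectrum _).eventually_all.2 fun μ hμ =>
      Complex.eventually_norm_one_add_mul_lt_one (hH μ hμ)
  have hdiag : ∀ᶠ t : ℝ in 𝓝[>] 0, ∀ i, 0 < 1 + t * A i i :=
    eventually_all.2 fun i => eventually_nhdsWithin_of_eventually_nhds <|
      ((continuous_const.add (continuous_id.mul continuous_const)).tendsto' 0 _
        (by simp)).eventually_const_lt one_pos
  obtain ⟨t, ht, hdiag, hspec⟩ := (eventually_mem_nhdsWithin.and (hdiag.and hspec)).exists
  refine ⟨t, ht, fun i j => ?_, fun z hz => ?_⟩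
  · rcases eq_or_ne i j with rfl | hij
    · simpa using (hdiag i).le
    · simpa [one_apply_ne hij] using mul_nonneg ht.le (hA i j hij)
  · have hmap : (1 + t • A).map (algebraMap ℝ ℂ) = 1 + (t : ℂ) • A.map (algebraMap ℝ ℂ) := by
      ext i j; by_cases hij : i = j <;> simp [one_apply, hij]
    rw [hmap] at hz
    obtain ⟨μ, hμ, rfl⟩ := spectrum.exists_eq_one_add_mul (Complex.ofReal_ne_zero.2 ht.ne') hz
    exact hspec μ hμ

theorem Metzler.exists_pos_mulVec_neg (hA : Metzler A) (hH : Hurwitz A) :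
    ∃ v : Fin n → ℝ, (∀ i, 0 < v i) ∧ ∀ i, (A *ᵥ v) i < 0 := by
  obtain ⟨t, ht, hT, hTσ⟩ := hA.exists_one_add_smul_nonneg_spectrum_lt_one hH
  have hs := summable_pow_of_forall_spectrum_map_lt_one hTσ
  set N := ∑' k, (1 + t • A) ^ k
  have hAN : A * N = -t⁻¹ • 1 := by
    have h : (1 - (1 + t • A)) * N = 1 := hs.one_sub_mul_tsum_pow
    rw [sub_add_cancel_left, neg_mul, smul_mul_assoc, neg_eq_iff_eq_neg] at h
    calc A * N = t⁻¹ • (t • (A * N)) := by rw [smul_smul, inv_mul_cancel₀ ht.ne', one_smul]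
      _ = -t⁻¹ • 1 := by rw [h, smul_neg, neg_smul]
  refine ⟨N *ᵥ 1, fun i => one_pos.trans_le (one_le_tsum_pow_mulVec_one hT hs i), fun i => ?_⟩
  rw [mulVec_mulVec, hAN]
  simp [neg_mulVec, smul_mulVec, ht]

theorem Metzler.posDef_neg_lyapunov_diagonal_div (hA : Metzler A) {u v : Fin n → ℝ}
    (hu : ∀ i, 0 < u i) (hv : ∀ i, 0 < v i) (hAu : ∀ i, (Aᵀ *ᵥ u) i < 0)
    (hAv : ∀ i, (A *ᵥ v) i < 0) :
    (-(Aᵀ * diagonal (u / v) + diagonal (u / v) * A)).PosDef := by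
  have hp : ∀ i, 0 ≤ (u / v) i := fun i => (div_pos (hu i) (hv i)).le
  refine posDef_neg_of_mulVec_neg (by simp [IsSymm, transpose_add, add_comm])
    (fun i j hij => ?_) hv fun i => ?_
  · simp only [Matrix.add_apply, mul_diagonal, diagonal_mul, transpose_apply]
    exact add_nonneg (mul_nonneg (hA j i hij.symm) (hp j)) (mul_nonneg (hp i) (hA i j hij))
  · have hDv : diagonal (u / v) *ᵥ v = u := by
      ext j; simp [mulVec_diagonal, div_mul_cancel₀ _ (hv j).ne']
    rw [add_mulVec, ← mulVec_mulVec, ← mulVec_mulVec, hDv, Pi.add_apply, mulVec_diagonal]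
    exact add_neg_of_neg_of_nonpos (hAu i) (mul_nonpos_of_nonneg_of_nonpos (hp i) (hAv i).le)

theorem hurwitz_of_lyapunov {P : Matrix (Fin n) (Fin n) ℝ} (hP : P.PosDef)
    (hAP : (-(Aᵀ * P + P * A)).PosDef) : Hurwitz A := by
  intro μ hμ
  set Aℂ := A.map (algebraMap ℝ ℂ)
  set Pℂ := P.map (algebraMap ℝ ℂ)
  obtain ⟨x, hx⟩ : ∃ x, Module.End.HasEigenvector (toLin' Aℂ) μ x := by
    rw [← spectrum_toLin', ← Module.End.hasEigenvalue_iff_mem_spectrum] at hμ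
    exact hμ.exists_hasEigenvector
  have hAx : Aℂ *ᵥ x = μ • x := by simpa using hx.apply_eq_smul
  have hmap : (-(Aᵀ * P + P * A)).map (algebraMap ℝ ℂ) = -(Aℂᴴ * Pℂ + Pℂ * Aℂ) := by
    rw [← conjTranspose_map _ (fun r => by simp), conjTranspose_eq_transpose_of_trivial]
    simp only [Aℂ, Pℂ, ← RingHom.mapMatrix_apply, map_neg, map_add, map_mul]
  have hc := hP.map_ofReal.dotProduct_mulVec_pos hx.2
  have hq := hAP.map_ofReal.dotProduct_mulVec_pos hx.2
  rw [hmap, neg_mulVec, add_mulVec, ← mulVec_mulVec, ← mulVec_mulVec, dotProduct_neg,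
    dotProduct_add, dotProduct_mulVec, ← star_mulVec, hAx, star_smul, smul_dotProduct,
    mulVec_smul, dotProduct_smul] at hq
  generalize star x ⬝ᵥ (Pℂ *ᵥ x) = c at hc hq
  have hre : (-(star μ • c + μ • c)).re = -(2 * μ.re * c.re) := by
    simp only [RCLike.star_def, smul_eq_mul, neg_add_rev, Complex.add_re, Complex.neg_re,
      Complex.mul_re, neg_sub, Complex.conj_re, Complex.conj_im, neg_mul, sub_neg_eq_add]
    ring
  nlinarith [(Complex.pos_iff.1 hc).1, hre ▸ (Complex.pos_iff.1 hq).1]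

end

theorem stmt16 {n : ℕ} (A : Matrix (Fin n) (Fin n) ℝ) (hA : Metzler A) :
    Hurwitz A ↔ ∃ p : Fin n → ℝ,
      (Matrix.diagonal p).PosDef ∧
        (-(Aᵀ * Matrix.diagonal p + Matrix.diagonal p * A)).PosDef := by
  refine ⟨fun hH => ?_, fun ⟨p, hp, hAp⟩ => hurwitz_of_lyapunov hp hAp⟩
  obtain ⟨v, hv, hAv⟩ := hA.exists_pos_mulVec_neg hH
  obtain ⟨u, hu, hAu⟩ := hA.transpose.exists_pos_mulVec_neg hH.transpose
  exact ⟨u / v, PosDef.diagonal fun i => div_pos (hu i) (hv i),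
    hA.posDef_neg_lyapunov_diagonal_div hu hv hAu hAv⟩
end
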